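/- arXiv:2503.12300 — 2 statements merged into one kernel-verified Lean document; each statement's English description precedes it below -/
import Mathlib

section
/- Let G be a finite group, p a prime, and let A be a subgroup of maximum order among the self-centralizing subgroups of G. If |G : A| = p^2 and |G : Z(G)| = p^3, then CD(G) = {Z(G), G}. -/
/-!
Passing from `H` to `H ⊓ C(H)` and then to a double centralizer never lowers the measure, so
`m*(G)` is attained by an abelian `M` with `C(C(M)) = M`. Write `|G : M| = p^i`,
`|G : C(M)| = p^j`. If `M = C(M)`, maximality of `A` gives `i = j ≥ 2`; if `M < C(M)`, then
`(i, j) ≠ (2, 1)`, since `M = C(C(M))` would be central of index `p` in `C(M)`, making `C(M)`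
abelian. Hence `i + j ≥ 3`, with equality only for `M = Z(G)`, so `m*(G) = |G| |Z(G)|`.
For `H ∈ CD(G)` this forces `H ⊓ C(H) = Z(G)` and `|G : H| |G : C(H)| = p^3`; an index `p^2`
would again put a central subgroup of index `p` in `H` or in `C(H) ∈ CD(G)`, so `H` is `Z(G)`
or `G`.
-/

/-- The Chermak-Delgado measure of a subgroup `H` of `G`: `|H| · |C_G(H)|`. -/
noncomputable def cdMeasure (G : Type*) [Group G] (H : Subgroup G) : ℕ :=
  Nat.card H * Nat.card (Subgroup.centralizer (H : Set G))

/-- The Chermak-Delgado lattice of `G`: the set of subgroups whose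
Chermak-Delgado measure is maximal. -/
def CD (G : Type*) [Group G] : Set (Subgroup G) :=
  {H : Subgroup G | ∀ K : Subgroup G, cdMeasure G K ≤ cdMeasure G H}

open Subgroup

namespace Subgroup

variable {G : Type*} [Group G]

theorem le_centralizer_centralizer (H : Subgroup G) :
    H ≤ centralizer (centralizer (H : Set G) : Set G) :=
  le_centralizer_iff.mpr le_rfl

theorem centralizer_centralizer_centralizer (H : Subgroup G) :
    centralizer (centralizer (centralizer (H : Set G) : Set G) : Set G) =
      centralizer (H : Set G) :=
  le_antisymm (centralizer_le (le_centralizer_centralizer H)) (le_centralizer_centralizer _)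

theorem centralizer_top : centralizer ((⊤ : Subgroup G) : Set G) = center G := by
  rw [coe_top, centralizer_univ]

theorem le_centralizer_of_relIndex_prime {N K : Subgroup G} (hN : N ≤ centralizer (K : Set G))
    (hp : (N.relIndex K).Prime) : K ≤ centralizer (K : Set G) := by
  have : Fact (N.relIndex K).Prime := ⟨hp⟩
  have hcenter : N.subgroupOf K ≤ center K := fun x hx =>
    mem_center_iff.mpr fun y => Subtype.ext (hN hx y y.2)
  have : IsCyclic (K ⧸ center K) := isCyclic_of_card_dvd_prime (p := N.relIndex K)
    (by rw [← index_eq_card]; exact index_dvd_of_le hcenter)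
  rw [le_centralizer_iff_isMulCommutative]
  exact isMulCommutative_of_isCyclic_quotient_center_self K

theorem relIndex_eq_of_index_eq_pow {N K : Subgroup G} {p n : ℕ} (hp : 0 < p) (h : N ≤ K)
    (hK : K.index = p ^ n) (hN : N.index = p ^ (n + 1)) : N.relIndex K = p := by
  have := relIndex_mul_index h
  rw [hK, hN, pow_succ, mul_comm] at this
  exact Nat.eq_of_mul_eq_mul_left (pow_pos hp n) this

theorem exists_index_eq_pow_of_le {H K : Subgroup G} {p n : ℕ} (hp : p.Prime) (h : H ≤ K)
    (hH : H.index = p ^ n) : ∃ i ≤ n, K.index = p ^ i :=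
  (Nat.dvd_prime_pow hp).mp (hH ▸ index_dvd_of_le h)

theorem card_mul_relIndex {H K : Subgroup G} (h : H ≤ K) :
    Nat.card H * H.relIndex K = Nat.card K := by
  simpa only [relIndex_bot_left] using relIndex_mul_relIndex ⊥ H K bot_le h

variable [Finite G]

theorem index_le_index_of_card_le {H K : Subgroup G} (h : Nat.card K ≤ Nat.card H) :
    H.index ≤ K.index := by
  have hH := card_mul_index H
  have hK := card_mul_index K
  have : 0 < Nat.card K := Nat.card_pos
  by_contra! h'
  nlinarith

theorem card_mul_card_le_card_inf_mul_card {H K L : Subgroup G} (hH : H ≤ L) (hK : K ≤ L) :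
    Nat.card H * Nat.card K ≤ Nat.card (H ⊓ K : Subgroup G) * Nat.card L := by
  calc Nat.card H * Nat.card K = Nat.card (H ⊓ K : Subgroup G) * K.relIndex H * Nat.card K := by
        rw [← inf_relIndex_left, card_mul_relIndex inf_le_left]
    _ ≤ Nat.card (H ⊓ K : Subgroup G) * K.relIndex L * Nat.card K := by
        gcongr
        exact relIndex_le_of_le_right hH
          (isFiniteRelIndex_iff_relIndex_ne_zero.mp isFiniteRelIndex_of_finiteIndex)
    _ = Nat.card (H ⊓ K : Subgroup G) * Nat.card L := by
        rw [mul_assoc, mul_comm (K.relIndex L), card_mul_relIndex hK]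

end Subgroup

section ChermakDelgado

variable {G : Type*} [Group G]

theorem cdMeasure_center_eq_top : cdMeasure G (center G) = cdMeasure G ⊤ := by
  rw [cdMeasure, cdMeasure, centralizer_center, centralizer_top, card_top, mul_comm]

theorem cdMeasure_mul_index_mul_index (K : Subgroup G) :
    cdMeasure G K * (K.index * (centralizer (K : Set G)).index) = Nat.card G ^ 2 := by
  rw [cdMeasure, mul_mul_mul_comm, card_mul_index, card_mul_index, sq]

variable [Finite G]

theorem cdMeasure_le_cdMeasure_iff {K L : Subgroup G} :
    cdMeasure G K ≤ cdMeasure G L ↔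
      L.index * (centralizer (L : Set G)).index ≤ K.index * (centralizer (K : Set G)).index := by
  have hK := cdMeasure_mul_index_mul_index K
  have hL := cdMeasure_mul_index_mul_index L
  have hKpos : 0 < cdMeasure G K := Nat.mul_pos Nat.card_pos Nat.card_pos
  have hLpos : 0 < cdMeasure G L := Nat.mul_pos Nat.card_pos Nat.card_pos
  have hpos : ∀ H : Subgroup G, 0 < H.index * (centralizer (H : Set G)).index := fun H =>
    Nat.mul_pos (Nat.pos_of_ne_zero index_ne_zero_of_finite)
      (Nat.pos_of_ne_zero index_ne_zero_of_finite)
  have hKi := hpos K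
  have hLi := hpos L
  constructor <;> intro h <;> by_contra! h' <;> nlinarith

theorem cdMeasure_le_cdMeasure_center_iff {K : Subgroup G} :
    cdMeasure G K ≤ cdMeasure G (center G) ↔
      (center G).index ≤ K.index * (centralizer (K : Set G)).index := by
  rw [cdMeasure_le_cdMeasure_iff, centralizer_center, index_top, mul_one]

theorem cdMeasure_le_cdMeasure_centralizer_centralizer (K : Subgroup G) :
    cdMeasure G K ≤ cdMeasure G (centralizer (centralizer (K : Set G) : Set G)) := by
  rw [cdMeasure, cdMeasure, centralizer_centralizer_centralizer]
  exact Nat.mul_le_mul_right _ (card_le_of_le (le_centralizer_centralizer K))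

theorem cdMeasure_le_cdMeasure_inf_centralizer (K : Subgroup G) :
    cdMeasure G K ≤ cdMeasure G (K ⊓ centralizer (K : Set G)) :=
  card_mul_card_le_card_inf_mul_card (le_centralizer_iff.mpr inf_le_right)
    (centralizer_le inf_le_left)

theorem exists_le_centralizer_cdMeasure_le (K : Subgroup G) :
    ∃ M : Subgroup G, M ≤ centralizer (M : Set G) ∧
      centralizer (centralizer (M : Set G) : Set G) = M ∧ cdMeasure G K ≤ cdMeasure G M := by
  set N := K ⊓ centralizer (K : Set G)
  have hN : N ≤ centralizer (N : Set G) := inf_le_right.trans (centralizer_le inf_le_left)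
  refine ⟨centralizer (centralizer (N : Set G) : Set G), ?_,
    centralizer_centralizer_centralizer _, ?_⟩
  · rw [centralizer_centralizer_centralizer]
    exact centralizer_le hN
  · exact (cdMeasure_le_cdMeasure_inf_centralizer K).trans
      (cdMeasure_le_cdMeasure_centralizer_centralizer N)

theorem centralizer_centralizer_eq_of_mem_CD {H : Subgroup G} (hH : H ∈ CD G) :
    centralizer (centralizer (H : Set G) : Set G) = H := by
  have h := hH (centralizer (centralizer (H : Set G) : Set G))
  rw [cdMeasure, cdMeasure, centralizer_centralizer_centralizer] at h
  exact (eq_of_le_of_card_ge (le_centralizer_centralizer H)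
    (Nat.le_of_mul_le_mul_right h Nat.card_pos)).symm

theorem centralizer_mem_CD {H : Subgroup G} (hH : H ∈ CD G) :
    centralizer (H : Set G) ∈ CD G :=
  fun K => (hH K).trans_eq <| by
    rw [cdMeasure, cdMeasure, centralizer_centralizer_eq_of_mem_CD hH, mul_comm]

theorem inf_centralizer_mem_CD {H : Subgroup G} (hH : H ∈ CD G) :
    H ⊓ centralizer (H : Set G) ∈ CD G :=
  fun K => (hH K).trans (cdMeasure_le_cdMeasure_inf_centralizer H)

theorem index_mul_index_centralizer_le_of_mem_CD {H : Subgroup G} (hH : H ∈ CD G) :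
    H.index * (centralizer (H : Set G)).index ≤ (center G).index := by
  simpa only [centralizer_center, index_top, mul_one] using
    cdMeasure_le_cdMeasure_iff.mp (hH (center G))

end ChermakDelgado

section

variable {G : Type*} [Group G] [Finite G] {p : ℕ}

theorem index_center_lt_or_eq_center (hp : p.Prime)
    (hself : ∀ B : Subgroup G, centralizer (B : Set G) = B → p ^ 2 ≤ B.index)
    (hZ : (center G).index = p ^ 3) {M : Subgroup G} (hM : M ≤ centralizer (M : Set G))
    (hMM : centralizer (centralizer (M : Set G) : Set G) = M) :
    (center G).index < M.index * (centralizer (M : Set G)).index ∨ M = center G := by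
  obtain ⟨i, hi3, hi⟩ := exists_index_eq_pow_of_le hp (hMM ▸ center_le_centralizer _) hZ
  obtain ⟨j, -, hj⟩ := exists_index_eq_pow_of_le hp (center_le_centralizer (M : Set G)) hZ
  by_cases hj0 : j = 0
  · have hL : centralizer (M : Set G) = ⊤ := index_eq_one.mp (by rw [hj, hj0, pow_zero])
    exact .inr (by rw [← hMM, hL, centralizer_top])
  left
  rw [hZ, hi, hj, ← pow_add]
  refine Nat.pow_lt_pow_right hp.one_lt ?_
  rcases eq_or_lt_of_le hM with hML | hML
  · have h2i : 2 ≤ i := (Nat.pow_le_pow_iff_right hp.one_lt).mp (hi ▸ hself M hML.symm)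
    have hij : i = j := Nat.pow_right_injective hp.two_le (hi.symm.trans (hML ▸ hj))
    omega
  · have hji : j < i := (Nat.pow_lt_pow_iff_right hp.one_lt).mp (hj ▸ hi ▸ index_strictAnti hML)
    have h21 : ¬ (i = 2 ∧ j = 1) := by
      rintro ⟨rfl, rfl⟩
      have hrel := relIndex_eq_of_index_eq_pow hp.pos hM hj hi
      have hL := le_centralizer_of_relIndex_prime hMM.ge (hrel ▸ hp)
      exact hML.not_ge (hL.trans hMM.le)
    omega

theorem cdMeasure_le_cdMeasure_center (hp : p.Prime)
    (hself : ∀ B : Subgroup G, centralizer (B : Set G) = B → p ^ 2 ≤ B.index)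
    (hZ : (center G).index = p ^ 3) (K : Subgroup G) :
    cdMeasure G K ≤ cdMeasure G (center G) := by
  obtain ⟨M, hM, hMM, hKM⟩ := exists_le_centralizer_cdMeasure_le K
  refine hKM.trans (cdMeasure_le_cdMeasure_center_iff.mpr ?_)
  rcases index_center_lt_or_eq_center hp hself hZ hM hMM with h | rfl
  · exact h.le
  · rw [centralizer_center, index_top, mul_one]

theorem inf_centralizer_eq_center_of_mem_CD (hp : p.Prime)
    (hself : ∀ B : Subgroup G, centralizer (B : Set G) = B → p ^ 2 ≤ B.index)
    (hZ : (center G).index = p ^ 3) {H : Subgroup G} (hH : H ∈ CD G) :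
    H ⊓ centralizer (H : Set G) = center G :=
  have hN := inf_centralizer_mem_CD hH
  (index_center_lt_or_eq_center hp hself hZ (inf_le_right.trans (centralizer_le inf_le_left))
    (centralizer_centralizer_eq_of_mem_CD hN)).resolve_left
    (not_lt.mpr (index_mul_index_centralizer_le_of_mem_CD hN))

theorem index_ne_sq_of_mem_CD (hp : p.Prime)
    (hself : ∀ B : Subgroup G, centralizer (B : Set G) = B → p ^ 2 ≤ B.index)
    (hZ : (center G).index = p ^ 3) {H : Subgroup G} (hH : H ∈ CD G) :
    H.index ≠ p ^ 2 := by
  intro hH2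
  have hHZ := inf_centralizer_eq_center_of_mem_CD hp hself hZ hH
  have hrel := relIndex_eq_of_index_eq_pow hp.pos (hHZ ▸ inf_le_left) hH2 hZ
  have hHC := le_centralizer_of_relIndex_prime (hHZ ▸ inf_le_right) (hrel ▸ hp)
  rw [inf_eq_left.mpr hHC] at hHZ
  rw [hHZ, hZ] at hH2
  exact absurd (Nat.pow_right_injective hp.two_le hH2) (by norm_num)

theorem eq_center_or_eq_top_of_mem_CD (hp : p.Prime)
    (hself : ∀ B : Subgroup G, centralizer (B : Set G) = B → p ^ 2 ≤ B.index)
    (hZ : (center G).index = p ^ 3) {H : Subgroup G} (hH : H ∈ CD G) :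
    H = center G ∨ H = ⊤ := by
  have hCC := centralizer_centralizer_eq_of_mem_CD hH
  obtain ⟨i, -, hi⟩ := exists_index_eq_pow_of_le hp (hCC ▸ center_le_centralizer _) hZ
  obtain ⟨j, -, hj⟩ := exists_index_eq_pow_of_le hp (center_le_centralizer (H : Set G)) hZ
  have hij : i + j = 3 := by
    have h := le_antisymm (index_mul_index_centralizer_le_of_mem_CD hH)
      (cdMeasure_le_cdMeasure_center_iff.mp (cdMeasure_le_cdMeasure_center hp hself hZ H))
    rw [hi, hj, hZ, ← pow_add] at h
    exact Nat.pow_right_injective hp.two_le h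
  have hi2 : i ≠ 2 := fun h => index_ne_sq_of_mem_CD hp hself hZ hH (h ▸ hi)
  have hj2 : j ≠ 2 := fun h => index_ne_sq_of_mem_CD hp hself hZ (centralizer_mem_CD hH) (h ▸ hj)
  obtain hi0 | hj0 : i = 0 ∨ j = 0 := by omega
  · exact .inr (index_eq_one.mp (by rw [hi, hi0, pow_zero]))
  · have hC : centralizer (H : Set G) = ⊤ := index_eq_one.mp (by rw [hj, hj0, pow_zero])
    exact .inl (by rw [← hCC, hC, centralizer_top])

end

theorem stmt_3_general (G : Type*) [Group G] [Finite G] (p : ℕ) (hp : p.Prime)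
    (A : Subgroup G)
    (hAmax : ∀ B : Subgroup G, Subgroup.centralizer (B : Set G) = B →
      Nat.card B ≤ Nat.card A)
    (hiA : A.index = p ^ 2) (hZ : (Subgroup.center G).index = p ^ 3) :
    CD G = {Subgroup.center G, ⊤} := by
  have hself : ∀ B : Subgroup G, centralizer (B : Set G) = B → p ^ 2 ≤ B.index :=
    fun B hB => hiA ▸ index_le_index_of_card_le (hAmax B hB)
  have hZ_mem : center G ∈ CD G := cdMeasure_le_cdMeasure_center hp hself hZ
  ext H
  refine ⟨eq_center_or_eq_top_of_mem_CD hp hself hZ, ?_⟩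
  rintro (rfl | rfl)
  · exact hZ_mem
  · exact fun K => (hZ_mem K).trans_eq cdMeasure_center_eq_top

theorem stmt_3 (G : Type*) [Group G] [Finite G] (p : ℕ) (hp : p.Prime)
    (A : Subgroup G) (hA : Subgroup.centralizer (A : Set G) = A)
    (hAmax : ∀ B : Subgroup G, Subgroup.centralizer (B : Set G) = B →
      Nat.card B ≤ Nat.card A)
    (hiA : A.index = p ^ 2) (hZ : (Subgroup.center G).index = p ^ 3) :
    CD G = {Subgroup.center G, ⊤} :=
  stmt_3_general G p hp A hAmax hiA hZ
end

section
/- Let G be a finite group with an abelian subgroup A of index 2, and suppose there exists x ∈ G with x ∉ A, x^2 ∈ A, x^2 ≠ 1, and x·a·x⁻¹ = a⁻¹ for all a ∈ A (so G is the generalized dicyclic group Dic(A)). If the subgroup A^2 = {a^2 : a ∈ A} of A has order exactly 2 (equivalently, A is of type (Z_2)^m × Z_4), then CD(G) is exactly the set of subgroups H of G with Z(G) ≤ H, and CD(G) is a quasi-antichain of width 3, namely the lattice interval between Z(G) and G. -/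
/-!
Every element outside `A` inverts `A`, so the centre of `G` is `{a ∈ A | a² = 1}`, the kernel of
squaring on `A`; since the image `A²` has order 2, `[G : Z(G)] = 4`. The rest follows from this
index alone. `G ⧸ Z(G)` is a Klein four-group, so exactly three subgroups lie strictly between
`Z(G)` and `G`; each has index 2, is cyclic over the centre, hence abelian and self-centralizing, so
every subgroup containing `Z(G)` has measure `|G| · |Z(G)|`. Adjoining `Z(G)` to a subgroup keeps
its centralizer and strictly enlarges it unless it already contains `Z(G)`.
-/

open Subgroup

section ChermakDelgado

variable {G : Type*} [Group G]

theorem centralizer_sup_center (H : Subgroup G) :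
    centralizer ((H ⊔ center G : Subgroup G) : Set G) = centralizer (H : Set G) := by
  refine le_antisymm (centralizer_le (SetLike.coe_subset_coe.mpr le_sup_left)) ?_
  rw [le_centralizer_iff]
  exact sup_le (le_centralizer_iff.mp le_rfl) (center_le_centralizer _)

theorem cdMeasure_lt_sup_center [Finite G] {H : Subgroup G} (hH : ¬center G ≤ H) :
    cdMeasure G H < cdMeasure G (H ⊔ center G) := by
  have hlt : H < H ⊔ center G := left_lt_sup.mpr hH
  unfold cdMeasure
  rw [centralizer_sup_center]
  have hcard : Nat.card H < Nat.card (H ⊔ center G : Subgroup G) :=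
    (card_le_of_le hlt.le).lt_of_ne fun h ↦ hlt.ne (eq_of_le_of_card_ge hlt.le h.ge)
  exact Nat.mul_lt_mul_of_pos_right hcard Nat.card_pos

theorem CD_eq_setOf_center_le [Finite G] {m : ℕ}
    (hm : ∀ H : Subgroup G, center G ≤ H → cdMeasure G H = m) :
    CD G = {H | center G ≤ H} := by
  have hle : ∀ K : Subgroup G, cdMeasure G K ≤ m := fun K ↦ by
    by_cases hK : center G ≤ K
    · exact (hm K hK).le
    · exact (cdMeasure_lt_sup_center hK).le.trans (hm _ le_sup_right).le
  ext H
  refine ⟨fun hH ↦ ?_, fun hH K ↦ (hle K).trans (hm H hH).ge⟩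
  by_contra hZ
  exact (cdMeasure_lt_sup_center hZ).not_ge (hH _)

end ChermakDelgado

section Interval

variable {G : Type*} [Group G]

theorem ncard_Ioo_eq_ncard_Ioo_quotient (N : Subgroup G) [N.Normal] :
    (Set.Ioo N ⊤).ncard = (Set.Ioo (⊥ : Subgroup (G ⧸ N)) ⊤).ncard := by
  let e := QuotientGroup.comapMk'OrderIso N
  have hbot : (e ⊥ : Subgroup G) = N := by
    change (⊥ : Subgroup (G ⧸ N)).comap (QuotientGroup.mk' N) = N
    rw [MonoidHom.comap_bot, QuotientGroup.ker_mk']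
  have htop : (e ⊤ : Subgroup G) = ⊤ := comap_top _
  have hmem : ∀ K, K ∈ Set.Ioo ⊥ ⊤ ↔ (e K : Subgroup G) ∈ Set.Ioo N ⊤ := fun K ↦ by
    rw [Set.mem_Ioo, Set.mem_Ioo, ← e.lt_iff_lt, ← e.lt_iff_lt, ← Subtype.coe_lt_coe,
      ← Subtype.coe_lt_coe, hbot, htop]
  symm
  refine Set.ncard_congr (fun K _ ↦ (e K : Subgroup G)) (fun K hK ↦ (hmem K).mp hK)
    (fun K L _ _ h ↦ e.injective (Subtype.ext h)) fun H hH ↦ ?_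
  have hH' : e (e.symm ⟨H, hH.1.le⟩) = ⟨H, hH.1.le⟩ := e.apply_symm_apply _
  exact ⟨_, (hmem _).mpr (by rw [hH']; exact hH), by rw [hH']⟩

theorem card_eq_of_mem_Ioo_of_card_eq_sq {Q : Type*} [Group Q] [Finite Q] {p : ℕ} (hp : p.Prime)
    (hQ : Nat.card Q = p ^ 2) {K : Subgroup Q} (hK : K ∈ Set.Ioo ⊥ ⊤) : Nat.card K = p := by
  obtain ⟨i, hi, hKi⟩ := (Nat.dvd_prime_pow hp).mp (hQ ▸ K.card_subgroup_dvd_card)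
  interval_cases i
  · exact absurd (card_eq_one.mp hKi) hK.1.ne'
  · simpa using hKi
  · exact absurd (card_eq_iff_eq_top K |>.mp (hKi.trans hQ.symm)) hK.2.ne

theorem ncard_Ioo_bot_top_of_card_eq_four {Q : Type*} [Group Q] [Finite Q] (hQ : Nat.card Q = 4)
    (hcyc : ¬IsCyclic Q) : (Set.Ioo (⊥ : Subgroup Q) ⊤).ncard = 3 := by
  have hcard : ∀ K ∈ Set.Ioo (⊥ : Subgroup Q) ⊤, Nat.card K = 2 := fun K hK ↦
    card_eq_of_mem_Ioo_of_card_eq_sq Nat.prime_two hQ hK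
  have hzpowers : ∀ q ∈ ({1}ᶜ : Set Q), zpowers q ∈ Set.Ioo ⊥ ⊤ := fun q hq ↦
    ⟨bot_lt_iff_ne_bot.mpr (zpowers_eq_bot.not.mpr hq), lt_top_iff_ne_top.mpr
      fun h ↦ hcyc (isCyclic_iff_exists_zpowers_eq_top.mpr ⟨q, h⟩)⟩
  have hnon : ({1}ᶜ : Set Q).ncard = 3 := by
    rw [Set.ncard_compl, Set.ncard_singleton, hQ]
  -- every nontrivial proper subgroup has order 2, so is generated by its unique element `≠ 1`
  rw [← hnon]
  refine (Set.ncard_congr (fun q _ ↦ zpowers q) hzpowers ?_ ?_).symm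
  · intro q r hq hr h
    obtain ⟨y, -, hy⟩ := (Nat.card_eq_two_iff' (1 : zpowers q)).mp (hcard _ (hzpowers q hq))
    have hr' : r ∈ zpowers q := h ▸ mem_zpowers r
    have hqr := (hy ⟨q, mem_zpowers q⟩ (by simpa using hq)).trans
      (hy ⟨r, hr'⟩ (by simpa using hr)).symm
    exact congrArg Subtype.val hqr
  · intro K hK
    obtain ⟨y, hyK, hy⟩ := K.bot_or_exists_ne_one.resolve_left hK.1.ne'
    rw [← Set.mem_compl_singleton_iff] at hy
    have hyK' : zpowers y ≤ K := zpowers_le.mpr hyK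
    refine ⟨y, hy, eq_of_le_of_card_ge hyK' ?_⟩
    rw [hcard K hK, hcard _ ⟨(hzpowers y hy).1, hyK'.trans_lt hK.2⟩]

end Interval

section IndexFour

variable {G : Type*} [Group G]

theorem isMulCommutative_of_relIndex_center_prime {H : Subgroup G} {p : ℕ} [Fact p.Prime]
    (hp : (center G).relIndex H = p) : IsMulCommutative H := by
  let f : H →* G ⧸ center G := (QuotientGroup.mk' (center G)).comp H.subtype
  have hker : f.ker = (center G).subgroupOf H := by
    rw [← MonoidHom.comap_ker, QuotientGroup.ker_mk']; rfl
  have : IsCyclic f.range :=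
    isCyclic_of_prime_card (p := p) (by rw [← index_ker, hker, ← hp]; rfl)
  refine f.rangeRestrict.isMulCommutative_of_isCyclic_of_ker_le_center fun z hz ↦ ?_
  rw [MonoidHom.ker_rangeRestrict, hker, mem_subgroupOf] at hz
  exact mem_center_iff.mpr fun g ↦ Subtype.ext (mem_center_iff.mp hz g)

theorem cdMeasure_top : cdMeasure G ⊤ = Nat.card G * Nat.card (center G) := by
  rw [cdMeasure, coe_top, centralizer_univ, card_top]

theorem centralizer_eq_self_of_index_two [Finite G] {H : Subgroup G} [IsMulCommutative H]
    (hH : H.index = 2) (hHZ : ¬H ≤ center G) : centralizer (H : Set G) = H := by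
  refine ((le_centralizer H).eq_or_lt.resolve_right fun hlt ↦ hHZ ?_).symm
  have : (centralizer (H : Set G)).index = 1 := by
    have := index_strictAnti hlt
    have := (centralizer (H : Set G)).index_ne_zero_of_finite
    omega
  exact centralizer_eq_top_iff_subset.mp (index_eq_one.mp this)

variable [Finite G]

theorem cdMeasure_eq_of_index_center_eq_four (hZ : (center G).index = 4) {H : Subgroup G}
    (hH : center G ≤ H) : cdMeasure G H = Nat.card G * Nat.card (center G) := by
  have hrel : (center G).relIndex H * H.index = 4 := hZ ▸ relIndex_mul_index hH
  have hle : H.index ≤ 4 := Nat.le_of_dvd four_pos (hZ ▸ index_dvd_of_le hH)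
  have hpos : 0 < H.index := Nat.pos_of_ne_zero H.index_ne_zero_of_finite
  interval_cases hi : H.index
  · rw [index_eq_one.mp hi, cdMeasure_top]
  · have hrel2 : (center G).relIndex H = 2 := by omega
    have := isMulCommutative_of_relIndex_center_prime (p := 2) hrel2
    have hHZ : ¬H ≤ center G := fun h ↦ by simp [relIndex_eq_one.mpr h] at hrel2
    have hcardH : Nat.card H * 2 = Nat.card G := hi ▸ H.card_mul_index
    have hcardZ : Nat.card (center G) * 4 = Nat.card G := hZ ▸ (center G).card_mul_index
    rw [cdMeasure, centralizer_eq_self_of_index_two hi hHZ, ← hcardZ,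
      show Nat.card H = 2 * Nat.card (center G) by omega]
    ring
  · omega
  · have hHZ : H = center G := le_antisymm (relIndex_eq_one.mp (by omega)) hH
    rw [hHZ, cdMeasure, centralizer_center, card_top, mul_comm]

theorem ncard_Ioo_center_top_of_index_eq_four (hZ : (center G).index = 4) :
    (Set.Ioo (center G) ⊤).ncard = 3 := by
  rw [ncard_Ioo_eq_ncard_Ioo_quotient]
  refine ncard_Ioo_bot_top_of_card_eq_four (by rw [← index_eq_card, hZ]) fun hcyc ↦ ?_
  have := isMulCommutative_of_isCyclic_quotient_center_self G
  simp [center_eq_top] at hZ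

end IndexFour

theorem sq_eq_one_of_commute_of_conj_eq_inv {G : Type*} [Group G] {a g : G} (hc : Commute g a)
    (h : g * a * g⁻¹ = a⁻¹) : a ^ 2 = 1 := by
  rw [hc.eq, mul_inv_cancel_right] at h
  rw [sq, mul_eq_one_iff_eq_inv]
  exact h

section InvertingExtension

variable {G : Type*} [Group G] {A : Subgroup G} [IsMulCommutative A] {x : G}
  (hiA : A.index = 2) (hx : x ∉ A) (hinv : ∀ a ∈ A, x * a * x⁻¹ = a⁻¹)
include hiA hx hinv

theorem conj_eq_inv_of_notMem {g : G} (hg : g ∉ A) {a : G} (ha : a ∈ A) :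
    g * a * g⁻¹ = a⁻¹ := by
  have hc : x⁻¹ * g ∈ A := (mul_mem_iff_of_index_two hiA).mpr (by simp [hx, hg])
  calc g * a * g⁻¹ = x * (x⁻¹ * g * a) * (x⁻¹ * g)⁻¹ * x⁻¹ := by group
    _ = x * a * x⁻¹ := by rw [setLike_mul_comm hc ha]; group
    _ = a⁻¹ := hinv a ha

theorem mem_center_iff_sq_eq_one {a : G} (ha : a ∈ A) : a ∈ center G ↔ a ^ 2 = 1 := by
  refine ⟨fun hZ ↦ sq_eq_one_of_commute_of_conj_eq_inv (g := x) (mem_center_iff.mp hZ x)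
    (hinv a ha), fun h2 ↦ mem_center_iff.mpr fun g ↦ ?_⟩
  by_cases hg : g ∈ A
  · exact setLike_mul_comm hg ha
  · refine mul_inv_eq_iff_eq_mul.mp ?_
    rw [conj_eq_inv_of_notMem hiA hx hinv hg ha, inv_eq_of_mul_eq_one_right (sq a ▸ h2)]

theorem center_le_of_sq_ne_one {a : G} (ha : a ∈ A) (ha2 : a ^ 2 ≠ 1) : center G ≤ A := by
  intro g hg
  by_contra hgA
  exact ha2 (sq_eq_one_of_commute_of_conj_eq_inv (g := g) (mem_center_iff.mp hg a).symm
    (conj_eq_inv_of_notMem hiA hx hinv hgA ha))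

open scoped IsMulCommutative in
theorem index_center_eq_four (hsq : {g : G | ∃ a ∈ A, g = a ^ 2}.ncard = 2) :
    (center G).index = 4 := by
  let φ : A →* G := A.subtype.comp (powMonoidHom 2)
  have hrange : (φ.range : Set G) = {g | ∃ a ∈ A, g = a ^ 2} := by
    ext g
    simp [φ, eq_comm]
  have hker : φ.ker = (center G).subgroupOf A := by
    ext a
    simp [φ, mem_subgroupOf, mem_center_iff_sq_eq_one hiA hx hinv a.2]
  obtain ⟨a, ha, ha2⟩ : ∃ a ∈ A, a ^ 2 ≠ 1 := by
    by_contra! h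
    have : {g : G | ∃ a ∈ A, g = a ^ 2} = {1} := by
      refine Set.eq_singleton_iff_unique_mem.mpr ⟨⟨1, one_mem A, (one_pow 2).symm⟩, ?_⟩
      rintro _ ⟨a, ha, rfl⟩
      exact h a ha
    simp [this] at hsq
  have hcard : Nat.card φ.range = 2 := by
    rw [← hsq, ← hrange]
    exact Nat.card_coe_set_eq _
  rw [← relIndex_mul_index (center_le_of_sq_ne_one hiA hx hinv ha ha2), hiA, relIndex, ← hker,
    index_ker, hcard]

end InvertingExtension

theorem stmt_11_general (G : Type*) [Group G] [Finite G]
    (A : Subgroup G) (hab : IsMulCommutative A) (hiA : A.index = 2)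
    (x : G) (hx : x ∉ A)
    (hinv : ∀ a ∈ A, x * a * x⁻¹ = a⁻¹)
    (hsq : {g : G | ∃ a ∈ A, g = a ^ 2}.ncard = 2) :
    CD G = {H : Subgroup G | Subgroup.center G ≤ H} ∧
    {H : Subgroup G | Subgroup.center G < H ∧ H < ⊤}.ncard = 3 := by
  have hZ : (center G).index = 4 := index_center_eq_four hiA hx hinv hsq
  exact ⟨CD_eq_setOf_center_le fun H hH ↦ cdMeasure_eq_of_index_center_eq_four hZ hH,
    ncard_Ioo_center_top_of_index_eq_four hZ⟩

theorem stmt_11 (G : Type*) [Group G] [Finite G]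
    (A : Subgroup G) (hab : IsMulCommutative A) (hiA : A.index = 2)
    (x : G) (hx : x ∉ A) (hx2 : x ^ 2 ∈ A) (hx2' : x ^ 2 ≠ 1)
    (hinv : ∀ a ∈ A, x * a * x⁻¹ = a⁻¹)
    (hsq : {g : G | ∃ a ∈ A, g = a ^ 2}.ncard = 2) :
    CD G = {H : Subgroup G | Subgroup.center G ≤ H} ∧
    {H : Subgroup G | Subgroup.center G < H ∧ H < ⊤}.ncard = 3 :=
  stmt_11_general G A hab hiA x hx hinv hsq
end
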